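/- Let k ≥ 3, let 0 < p < 1, let 2 ≤ ℓ < k, and let π = k_1 + … + k_t be a proper partition of k with max_i k_i ≤ ℓ. Then every hypergraph sequence satisfying CD_p(ℓ) also satisfies Expand_p(π). -/

import Mathlib

open Filter Finset Asymptotics

/-- A hypergraph sequence: for each `n`, the edge set of a hypergraph
on the vertex set `Fin n`. -/
abbrev HSeq : Type := (n : ℕ) → Finset (Finset (Fin n))

/-- The sequence is `k`-uniform: every edge has exactly `k` vertices. -/
def UniformSeq (k : ℕ) (H : HSeq) : Prop :=
  ∀ n : ℕ, ∀ e ∈ H n, e.card = k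

/-- A proper partition of `k`: an (ordered list representing an unordered) collection of
at least two positive integers summing to `k`. -/
def ProperPartition (k : ℕ) (π : List ℕ) : Prop :=
  2 ≤ π.length ∧ (∀ m ∈ π, 0 < m) ∧ π.sum = k

/-- `π'` is a refinement of `π`: there is a surjection `φ` from the parts of `π'`
to the parts of `π` so that each part of `π` is the sum of its `φ`-preimages. -/
def IsRefinement (π' π : List ℕ) : Prop :=
  ∃ φ : Fin π'.length → Fin π.length, Function.Surjective φ ∧
    ∀ i : Fin π.length, π.get i = ∑ j ∈ Finset.univ.filter (fun j => φ j = i), π'.get j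

/-- `e(S_1, …, S_t)`: the number of tuples `(s_1, …, s_t) ∈ S_1 × ⋯ × S_t` whose
union is an edge of `H`. -/
def eCount {n : ℕ} (H : Finset (Finset (Fin n))) {t : ℕ}
    (S : Fin t → Finset (Finset (Fin n))) : ℕ :=
  ((Fintype.piFinset S).filter (fun s => Finset.univ.biUnion s ∈ H)).card

/-- The property `Expand_p(π)` of a hypergraph sequence. -/
def Expand (k : ℕ) (p : ℝ) (π : List ℕ) (H : HSeq) : Prop :=
  ∃ f : ℕ → ℝ, f =o[atTop] (fun n => (n : ℝ) ^ k) ∧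
    ∀ n : ℕ, ∀ S : Fin π.length → Finset (Finset (Fin n)),
      (∀ i : Fin π.length, ∀ s ∈ S i, s.card = π.get i) →
      |(eCount (H n) S : ℝ) - p * ∏ i : Fin π.length, ((S i).card : ℝ)| ≤ f n

/-- The property `PartiteExpand_p(π)`: the `Expand` estimate is only required when the
vertex sets `V(S_i)` are pairwise disjoint. -/
def PartiteExpand (k : ℕ) (p : ℝ) (π : List ℕ) (H : HSeq) : Prop :=
  ∃ f : ℕ → ℝ, f =o[atTop] (fun n => (n : ℝ) ^ k) ∧
    ∀ n : ℕ, ∀ S : Fin π.length → Finset (Finset (Fin n)),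
      (∀ i : Fin π.length, ∀ s ∈ S i, s.card = π.get i) →
      (∀ i j : Fin π.length, i ≠ j →
        Disjoint ((S i).biUnion id) ((S j).biUnion id)) →
      |(eCount (H n) S : ℝ) - p * ∏ i : Fin π.length, ((S i).card : ℝ)| ≤ f n

/-- `K_k(G)`: the `k`-element vertex subsets all of whose `ℓ`-element subsets are
edges of the `ℓ`-uniform hypergraph `G`. -/
def cliqueSet (k ℓ : ℕ) {n : ℕ} (G : Finset (Finset (Fin n))) : Finset (Finset (Fin n)) :=
  (Finset.powersetCard k (Finset.univ : Finset (Fin n))).filter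
    (fun T => ∀ S ∈ Finset.powersetCard ℓ T, S ∈ G)

/-- The property `CD_p(ℓ)` of a hypergraph sequence. -/
def CD (k : ℕ) (p : ℝ) (ℓ : ℕ) (H : HSeq) : Prop :=
  ∃ f : ℕ → ℝ, f =o[atTop] (fun n => (n : ℝ) ^ k) ∧
    ∀ n : ℕ, ∀ G : Finset (Finset (Fin n)), (∀ e ∈ G, e.card = ℓ) →
      |(((cliqueSet k ℓ G) ∩ H n).card : ℝ) - p * ((cliqueSet k ℓ G).card : ℝ)| ≤ f n

/-- The property `CD_p(ℓ,s)` of a hypergraph sequence: `G` ranges over `ℓ`-uniform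
hypergraphs whose vertex set `W` is a subset of `Fin n`, and one counts `k`-sets
inducing at least `s` edges of `G`. -/
def CDs (k : ℕ) (p : ℝ) (ℓ s : ℕ) (H : HSeq) : Prop :=
  ∃ f : ℕ → ℝ, f =o[atTop] (fun n => (n : ℝ) ^ k) ∧
    ∀ n : ℕ, ∀ W : Finset (Fin n), ∀ G : Finset (Finset (Fin n)),
      (∀ e ∈ G, e.card = ℓ ∧ e ⊆ W) →
      |(((H n).filter (fun T => s ≤ (G.filter (fun e => e ⊆ T)).card)).card : ℝ) -
        p * (((Finset.powersetCard k W).filter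
          (fun T => s ≤ (G.filter (fun e => e ⊆ T)).card)).card : ℝ)| ≤ f n

/-- The `k`-tuple `(x_1, …, x_{k-ℓ}, y_{1,ε_1}, …, y_{ℓ,ε_ℓ})`. -/
def octTuple {n : ℕ} (k ℓ : ℕ) (x : Fin (k - ℓ) → Fin n) (y : Fin ℓ × Fin 2 → Fin n)
    (ε : Fin ℓ → Fin 2) (i : Fin k) : Fin n :=
  if h : (i : ℕ) < k - ℓ then x ⟨(i : ℕ), h⟩
  else
    have hi : (i : ℕ) - (k - ℓ) < ℓ := by have := i.isLt; omega
    y (⟨(i : ℕ) - (k - ℓ), hi⟩, ε ⟨(i : ℕ) - (k - ℓ), hi⟩)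

/-- The squashed octahedron `O[x⃗, y⃗]`: the collection of `k`-element sets of the form
`{x_1, …, x_{k-ℓ}, y_{1,i_1}, …, y_{ℓ,i_ℓ}}`. -/
def octSet {n : ℕ} (k ℓ : ℕ) (x : Fin (k - ℓ) → Fin n)
    (y : Fin ℓ × Fin 2 → Fin n) : Finset (Finset (Fin n)) :=
  (Finset.image (fun ε : Fin ℓ → Fin 2 =>
    Finset.image (octTuple k ℓ x y ε) Finset.univ) Finset.univ).filter
    (fun T => T.card = k)

/-- `Σ (−1)^{|O[x⃗,y⃗] ∩ E(H)|}` over all choices of vertices. -/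
noncomputable def devSum (k ℓ : ℕ) {n : ℕ} (H : Finset (Finset (Fin n))) : ℝ :=
  ∑ x : Fin (k - ℓ) → Fin n, ∑ y : Fin ℓ × Fin 2 → Fin n,
    (-1 : ℝ) ^ ((octSet k ℓ x y ∩ H).card)

/-- The property `Dev(ℓ)` of a hypergraph sequence. -/
def Dev (k ℓ : ℕ) (H : HSeq) : Prop :=
  (fun n => devSum k ℓ (H n)) =o[atTop] (fun n => (n : ℝ) ^ (k + ℓ))

open scoped Classical in
/-- `dev_{ℓ,P}(H)`: the deviation sum restricted to octahedra all of whose `k`-tuples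
lie in `P`. -/
noncomputable def devP (k ℓ : ℕ) {n : ℕ} (H : Finset (Finset (Fin n)))
    (P : Set (Fin k → Fin n)) : ℝ :=
  ∑ x : Fin (k - ℓ) → Fin n, ∑ y : Fin ℓ × Fin 2 → Fin n,
    if ∀ ε : Fin ℓ → Fin 2, octTuple k ℓ x y ε ∈ P then
      (-1 : ℝ) ^ ((octSet k ℓ x y ∩ H).card)
    else 0

/-- `Q ⊆ V(H)^k` is complete in coordinate `i`: membership in `Q` only depends on the
coordinates other than `i`. -/
def CompleteInCoord {n k : ℕ} (Q : Set (Fin k → Fin n)) (i : Fin k) : Prop :=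
  ∃ Q' : Set ({j : Fin k // j ≠ i} → Fin n),
    Q = {z : Fin k → Fin n | (fun j : {j : Fin k // j ≠ i} => z j.1) ∈ Q'}

open Function
open scoped Classical

/-!
Colour the vertices with `k` colours, the colours being split by `τ : Fin k → Fin t` into blocks
`{c | τ c = i}` of sizes `k_1, …, k_t`. For a colouring `χ`, `colourClass τ χ S i` consists of the
members of `S i` that `χ` maps onto block `i`, and `auxGraph τ χ ℓ S` is the `ℓ`-graph of
`χ`-rainbow `ℓ`-sets whose trace on each block, when it has full size `k_i`, lies in `S i`.
Since `ℓ ≥ 2` and every `k_i ≤ ℓ`, the `k`-cliques of `auxGraph τ χ ℓ S` are exactly the unions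
of tuples from `colourClass τ χ S`, so `CD_p(ℓ)` gives `e(S^χ) = p ∏ |S_i^χ| + o(n^k)` for these
classes `S_i^χ`. Every pairwise disjoint tuple of `S` is split correctly by the same number
`N ≥ k^n` of colourings and no other tuple is, so averaging over the `k^n` colourings bounds
`e(S) - p · #(disjoint tuples)` by `k^k · o(n^k)`; the other tuples number `O(n^(k-1))`.
-/

section Colourings

variable {α β : Type*} [Fintype α] [DecidableEq α] [Fintype β] [DecidableEq β]

omit [DecidableEq β] in
/-- Swapping the values on `A` of two maps is a bijection between the two products. -/
lemma card_filter_and_restrict_mul (A : Finset α) (P : (α → β) → Prop) [DecidablePred P]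
    (hP : ∀ χ ψ : α → β, (∀ x ∉ A, χ x = ψ x) → P χ → P ψ)
    (Q : (A → β) → Prop) [DecidablePred Q] :
    #{χ | P χ ∧ Q (fun x => χ x)} * Fintype.card (A → β) = #{χ | P χ} * #{g | Q g} := by
  let swap : (α → β) × (A → β) → (α → β) × (A → β) := fun χg =>
    (fun x => if hx : x ∈ A then χg.2 ⟨x, hx⟩ else χg.1 x, fun x => χg.1 x)
  have hswap : ∀ χg, swap (swap χg) = χg := by
    rintro ⟨χ, g⟩
    refine Prod.ext (funext fun x => ?_) (funext fun x => ?_)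
    · by_cases hx : x ∈ A <;> simp [swap, hx]
    · simp [swap]
  have hout : ∀ χg : (α → β) × (A → β), ∀ x ∉ A, χg.1 x = (swap χg).1 x := by
    intro χg x hx
    simp [swap, hx]
  rw [← card_univ, ← card_product, ← card_product]
  refine card_nbij' swap swap ?_ ?_ (fun χg _ => hswap χg) (fun χg _ => hswap χg)
  · rintro χg hχg
    simp only [coe_product, Set.mem_prod, mem_coe, mem_filter, mem_univ, true_and] at hχg ⊢
    exact ⟨hP _ _ (hout χg) hχg.1.1, by simpa [swap] using hχg.1.2⟩
  · rintro χg hχg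
    simp only [coe_product, Set.mem_prod, mem_coe, mem_filter, mem_univ, true_and,
      and_true] at hχg ⊢
    exact ⟨hP _ _ (hout χg) hχg.1, by simpa [swap] using hχg.2⟩

lemma card_filter_image_eq {γ : Type*} [Fintype γ] [DecidableEq γ] (C : Finset β)
    (hC : Fintype.card γ = #C) :
    #{g : γ → β | univ.image g = C} = (#C).factorial := by
  have hmem : ∀ g : γ → β, univ.image g = C → ∀ x, g x ∈ C := fun g hg x =>
    hg ▸ mem_image_of_mem _ (mem_univ x)
  have hbij : ∀ g : {g : γ → β // univ.image g = C},
      Bijective (fun x => (⟨g.1 x, hmem g.1 g.2 x⟩ : C)) := by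
    rintro ⟨g, hg⟩
    have hinj : Set.InjOn g ↑(univ : Finset γ) := card_image_iff.mp (by rw [hg, card_univ, hC])
    refine ⟨fun x y hxy => hinj (mem_coe.2 (mem_univ x)) (mem_coe.2 (mem_univ y))
      (congrArg Subtype.val hxy), fun c => ?_⟩
    obtain ⟨x, -, hx⟩ := mem_image.mp (show (c : β) ∈ univ.image g from hg ▸ c.2)
    exact ⟨x, Subtype.ext hx⟩
  have himage : ∀ e : γ ≃ C, univ.image (fun x => (e x : β)) = C := by
    intro e
    ext c
    refine ⟨fun hc => ?_, fun hc => mem_image.2 ⟨e.symm ⟨c, hc⟩, mem_univ _, by simp⟩⟩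
    obtain ⟨x, -, rfl⟩ := mem_image.mp hc
    exact (e x).2
  have e : {g : γ → β // univ.image g = C} ≃ (γ ≃ C) :=
    { toFun := fun g => Equiv.ofBijective _ (hbij g)
      invFun := fun e => ⟨fun x => e x, himage e⟩
      left_inv := fun g => rfl
      right_inv := fun e => Equiv.ext fun x => rfl }
  rw [← Fintype.card_subtype, Fintype.card_congr e,
    Fintype.card_equiv (Fintype.equivOfCardEq (by simpa using hC)), hC]

omit [Fintype α] [DecidableEq α] [Fintype β] in
lemma univ_image_comp_val (s : Finset α) (χ : α → β) :
    univ.image (fun x : s => χ x) = s.image χ := by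
  ext b
  simp

lemma card_filter_forall_image_eq_mul {ι : Type*} [DecidableEq ι]
    (s : ι → Finset α) (C : ι → Finset β) (J : Finset ι)
    (hs : (J : Set ι).PairwiseDisjoint s) (hcard : ∀ i ∈ J, #(s i) = #(C i)) :
    #{χ : α → β | ∀ i ∈ J, (s i).image χ = C i} * Fintype.card β ^ ∑ i ∈ J, #(s i) =
      (∏ i ∈ J, (#(C i)).factorial) * Fintype.card β ^ Fintype.card α := by
  induction J using Finset.induction_on with
  | empty => simp
  | @insert j J hj ih =>
    rw [coe_insert, Set.pairwiseDisjoint_insert] at hs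
    have hstep := card_filter_and_restrict_mul (s j) (fun χ => ∀ i ∈ J, (s i).image χ = C i)
      (fun χ ψ hχψ hχ i hi => by
        rw [← hχ i hi]
        refine image_congr fun x hx => (hχψ x ?_).symm
        exact disjoint_left.mp (hs.2 i hi (by rintro rfl; exact hj hi)).symm hx)
      (fun g => univ.image g = C j)
    simp only [univ_image_comp_val, card_filter_image_eq (C j) (by
      rw [Fintype.card_coe, hcard j (mem_insert_self j J)]), Fintype.card_fun,
      Fintype.card_coe] at hstep
    simp only [forall_mem_insert, sum_insert hj, prod_insert hj, pow_add]
    rw [filter_congr (fun χ _ => and_comm), ← mul_assoc, hstep, mul_right_comm,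
      ih hs.1 (fun i hi => hcard i (mem_insert_of_mem hi))]
    ring

end Colourings

section Fibres

variable {k t : ℕ}

lemma sum_card_fibres (τ : Fin k → Fin t) : ∑ i, #{c | τ c = i} = k := by
  rw [← card_eq_sum_card_fiberwise fun c _ => mem_univ (τ c), card_univ, Fintype.card_fin]

lemma exists_card_fibres_eq (κ : Fin t → ℕ) (hκ : ∑ i, κ i = k) :
    ∃ τ : Fin k → Fin t, ∀ i, #{c | τ c = i} = κ i := by
  subst hκ
  refine ⟨fun c => (finSigmaFinEquiv.symm c).1, fun i => ?_⟩
  rw [← Fintype.card_subtype, ← Fintype.card_fin (κ i)]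
  exact Fintype.card_congr ((finSigmaFinEquiv.symm.subtypeEquiv fun _ => Iff.rfl).trans
    (Equiv.sigmaSubtype i))

lemma pairwise_disjoint_of_sum_card_le {ι α : Type*} [Fintype ι] [DecidableEq ι] [DecidableEq α]
    (s : ι → Finset α) (h : ∑ i, #(s i) ≤ #(univ.biUnion s)) : Pairwise (Disjoint on s) := by
  intro i j hij
  by_contra hnd
  obtain ⟨v, hvi, hvj⟩ := not_disjoint_iff.1 hnd
  have hunion : univ.biUnion s = s i ∪ (univ.erase i).biUnion s := by
    rw [← biUnion_insert, insert_erase (mem_univ i)]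
  have hv : v ∈ s i ∩ (univ.erase i).biUnion s :=
    mem_inter.2 ⟨hvi, mem_biUnion.2 ⟨j, mem_erase.2 ⟨hij.symm, mem_univ j⟩, hvj⟩⟩
  have h₁ := card_union_add_card_inter (s i) ((univ.erase i).biUnion s)
  have h₂ : #((univ.erase i).biUnion s) ≤ ∑ l ∈ univ.erase i, #(s l) := card_biUnion_le
  have h₃ := add_sum_erase univ (fun l => #(s l)) (mem_univ i)
  have h₄ := card_pos.2 ⟨v, hv⟩
  rw [hunion] at h
  omega

variable {α : Type*} [Fintype α] [DecidableEq α] {τ : Fin k → Fin t}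

omit [Fintype α] [DecidableEq α] in
lemma comp_eq_of_image_eq {χ : α → Fin k} {a : Finset α} {i : Fin t}
    (ha : a.image χ = ({c | τ c = i} : Finset (Fin k))) {v : α} (hv : v ∈ a) :
    τ (χ v) = i := by
  have := ha ▸ mem_image_of_mem χ hv
  simpa using this

lemma card_filter_forall_image_eq_fibre_mul (s : Fin t → Finset α)
    (hs : ∀ i, #(s i) = #{c | τ c = i}) :
    #{χ : α → Fin k | ∀ i, (s i).image χ = ({c | τ c = i} : Finset (Fin k))} * k ^ k =
      if Pairwise (Disjoint on s) then
        (∏ i, (#{c | τ c = i}).factorial) * k ^ Fintype.card α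
      else 0 := by
  split_ifs with hdisj
  · have hsum : ∑ i, #(s i) = k := by
      rw [sum_congr rfl fun i _ => hs i, sum_card_fibres]
    have := card_filter_forall_image_eq_mul s (fun i => ({c | τ c = i} : Finset (Fin k))) univ
      (by rw [coe_univ]; exact Set.pairwise_univ.2 hdisj) (fun i _ => hs i)
    simpa only [mem_univ, true_imp_iff, hsum, Fintype.card_fin] using this
  · rw [Pairwise] at hdisj
    push Not at hdisj
    obtain ⟨i, j, hij, hnd⟩ := hdisj
    obtain ⟨v, hvi, hvj⟩ := not_disjoint_iff.1 hnd
    refine mul_eq_zero_of_left (card_eq_zero.2 (filter_eq_empty_iff.2 fun χ _ hχ => hij ?_)) _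
    rw [← comp_eq_of_image_eq (hχ i) hvi, comp_eq_of_image_eq (hχ j) hvj]

lemma sum_card_filter_forall_image_eq_fibre_mul (A : Finset (Fin t → Finset α))
    (hA : ∀ s ∈ A, ∀ i, #(s i) = #{c | τ c = i}) :
    (∑ χ : α → Fin k, #{s ∈ A | ∀ i, (s i).image χ = ({c | τ c = i} : Finset (Fin k))}) * k ^ k =
      (∏ i, (#{c | τ c = i}).factorial) * k ^ Fintype.card α *
        #{s ∈ A | Pairwise (Disjoint on s)} := by
  simp only [card_filter]
  rw [sum_comm, sum_mul]
  simp only [← card_filter]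
  rw [sum_congr rfl fun s hs => card_filter_forall_image_eq_fibre_mul s (hA s hs), ← sum_filter,
    sum_const, smul_eq_mul, mul_comm]

end Fibres

section Overlaps

variable {n : ℕ}

lemma card_le_pow_of_forall_card_eq {S : Finset (Finset (Fin n))} {m : ℕ}
    (hS : ∀ a ∈ S, #a = m) : #S ≤ n ^ m :=
  calc #S ≤ #(powersetCard m (univ : Finset (Fin n))) :=
        card_le_card fun a ha => mem_powersetCard.2 ⟨subset_univ a, hS a ha⟩
    _ = n.choose m := by simp
    _ ≤ n ^ m := Nat.choose_le_pow n m

lemma card_filter_mem_le_pow {S : Finset (Finset (Fin n))} {m : ℕ}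
    (hS : ∀ a ∈ S, #a = m + 1) (v : Fin n) : #{a ∈ S | v ∈ a} ≤ n ^ m := by
  have hinj : Set.InjOn (fun a : Finset (Fin n) => a.erase v) ↑{a ∈ S | v ∈ a} :=
    (erase_injOn' v).mono fun a ha => (mem_filter.1 (mem_coe.1 ha)).2
  rw [← card_image_of_injOn hinj]
  refine card_le_pow_of_forall_card_eq fun b hb => ?_
  obtain ⟨a, ha, rfl⟩ := mem_image.1 hb
  rw [mem_filter] at ha
  rw [card_erase_of_mem ha.2, hS a ha.1, Nat.add_sub_cancel]

variable {t m : ℕ} {S : Fin t → Finset (Finset (Fin n))} {κ : Fin t → ℕ}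

/-- Two parts sharing a vertex `v` lose a free vertex each, while `v` itself has `n` choices. -/
lemma card_filter_not_disjoint_le (hS : ∀ i, ∀ a ∈ S i, #a = κ i) (hκ : ∀ i, 0 < κ i)
    (hm : ∑ i, κ i = m) {i j : Fin t} (hij : i ≠ j) :
    #{s ∈ Fintype.piFinset S | ¬Disjoint (s i) (s j)} ≤ n ^ (m - 1) := by
  set shared : Fin t → ℕ := fun l => if l = i ∨ l = j then 1 else 0
  have hshared : ∑ l, shared l = 2 := by
    have : ({l | l = i ∨ l = j} : Finset (Fin t)) = {i, j} := by ext; simp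
    simp [shared, sum_boole, this, card_pair hij]
  have hshared_le : ∀ l, shared l ≤ κ l := fun l => by
    by_cases hl : l = i ∨ l = j <;> simp [shared, hl, Nat.one_le_iff_ne_zero, (hκ l).ne']
  have hm2 : 2 ≤ m := hshared ▸ hm ▸ sum_le_sum fun l _ => hshared_le l
  let T : Fin n → Fin t → Finset (Finset (Fin n)) := fun v l =>
    if l = i ∨ l = j then {a ∈ S l | v ∈ a} else S l
  have hsub : {s ∈ Fintype.piFinset S | ¬Disjoint (s i) (s j)} ⊆
      univ.biUnion fun v => Fintype.piFinset (T v) := by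
    intro s hs
    rw [mem_filter, Fintype.mem_piFinset, not_disjoint_iff] at hs
    obtain ⟨hs, v, hvi, hvj⟩ := hs
    refine mem_biUnion.2 ⟨v, mem_univ v, Fintype.mem_piFinset.2 fun l => ?_⟩
    by_cases hl : l = i ∨ l = j
    · simp only [T, if_pos hl, mem_filter]
      rcases hl with rfl | rfl
      exacts [⟨hs l, hvi⟩, ⟨hs l, hvj⟩]
    · simpa only [T, if_neg hl] using hs l
  have hT : ∀ v, #(Fintype.piFinset (T v)) ≤ n ^ (m - 2) := by
    intro v
    rw [Fintype.card_piFinset, ← hshared, ← hm, ← sum_tsub_distrib _ fun l _ => hshared_le l,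
      ← prod_pow_eq_pow_sum]
    refine prod_le_prod' fun l _ => ?_
    by_cases hl : l = i ∨ l = j
    · simp only [T, shared, if_pos hl]
      exact card_filter_mem_le_pow (fun a ha => by rw [hS l a ha, Nat.sub_add_cancel (hκ l)]) v
    · simp only [T, shared, if_neg hl, Nat.sub_zero]
      exact card_le_pow_of_forall_card_eq (hS l)
  calc #{s ∈ Fintype.piFinset S | ¬Disjoint (s i) (s j)}
      ≤ ∑ v, #(Fintype.piFinset (T v)) := (card_le_card hsub).trans card_biUnion_le
    _ ≤ ∑ _v : Fin n, n ^ (m - 2) := sum_le_sum fun v _ => hT v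
    _ = n ^ (m - 1) := by
      rw [sum_const, card_univ, Fintype.card_fin, smul_eq_mul, ← pow_succ']
      congr 1
      omega

lemma card_filter_not_pairwise_disjoint_le (hS : ∀ i, ∀ a ∈ S i, #a = κ i)
    (hκ : ∀ i, 0 < κ i) (hm : ∑ i, κ i = m) :
    #{s ∈ Fintype.piFinset S | ¬Pairwise (Disjoint on s)} ≤ t * t * n ^ (m - 1) := by
  have hsub : {s ∈ Fintype.piFinset S | ¬Pairwise (Disjoint on s)} ⊆
      univ.offDiag.biUnion fun q : Fin t × Fin t =>
        {s ∈ Fintype.piFinset S | ¬Disjoint (s q.1) (s q.2)} := by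
    intro s hs
    rw [mem_filter, Pairwise] at hs
    push Not at hs
    obtain ⟨hs, i, j, hij, hnd⟩ := hs
    exact mem_biUnion.2 ⟨(i, j), by simpa using hij, mem_filter.2 ⟨hs, hnd⟩⟩
  calc #{s ∈ Fintype.piFinset S | ¬Pairwise (Disjoint on s)}
      ≤ ∑ q ∈ univ.offDiag, #{s ∈ Fintype.piFinset S | ¬Disjoint (s q.1) (s q.2)} :=
        (card_le_card hsub).trans card_biUnion_le
    _ ≤ ∑ _q ∈ (univ : Finset (Fin t)).offDiag, n ^ (m - 1) :=
        sum_le_sum fun q hq => card_filter_not_disjoint_le hS hκ hm (mem_offDiag.1 hq).2.2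
    _ ≤ t * t * n ^ (m - 1) := by
      rw [sum_const, smul_eq_mul, offDiag_card, card_univ, Fintype.card_fin]
      exact Nat.mul_le_mul_right _ (Nat.sub_le _ _)

end Overlaps

section AuxiliaryGraph

variable {n k t : ℕ} (τ : Fin k → Fin t) (χ : Fin n → Fin k)

def colourClass (S : Fin t → Finset (Finset (Fin n))) (i : Fin t) : Finset (Finset (Fin n)) :=
  {a ∈ S i | a.image χ = ({c | τ c = i} : Finset (Fin k))}

def auxGraph (ℓ : ℕ) (S : Fin t → Finset (Finset (Fin n))) :
    Finset (Finset (Fin n)) :=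
  {e ∈ powersetCard ℓ univ | Set.InjOn χ e ∧
    ∀ i, #{v ∈ e | τ (χ v) = i} = #{c | τ c = i} → {v ∈ e | τ (χ v) = i} ∈ S i}

variable {τ χ}

lemma filter_biUnion_eq_of_image_eq {s : Fin t → Finset (Fin n)}
    (hs : ∀ i, (s i).image χ = ({c | τ c = i} : Finset (Fin k))) (i : Fin t) :
    {v ∈ univ.biUnion s | τ (χ v) = i} = s i := by
  ext v
  simp only [mem_filter, mem_biUnion, mem_univ, true_and]
  constructor
  · rintro ⟨⟨j, hv⟩, rfl⟩
    rwa [comp_eq_of_image_eq (hs j) hv]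
  · exact fun hv => ⟨⟨i, hv⟩, comp_eq_of_image_eq (hs i) hv⟩

lemma injOn_biUnion_of_image_eq {s : Fin t → Finset (Fin n)}
    (hs : ∀ i, (s i).image χ = ({c | τ c = i} : Finset (Fin k)))
    (hcard : ∀ i, #(s i) = #{c | τ c = i}) : Set.InjOn χ (univ.biUnion s) := by
  intro u hu v hv huv
  obtain ⟨i, -, hui⟩ := mem_biUnion.1 (mem_coe.1 hu)
  obtain ⟨j, -, hvj⟩ := mem_biUnion.1 (mem_coe.1 hv)
  obtain rfl : i = j := by
    rw [← comp_eq_of_image_eq (hs i) hui, ← comp_eq_of_image_eq (hs j) hvj, huv]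
  exact card_image_iff.1 (by rw [hs i, hcard i]) hui hvj huv

lemma card_biUnion_of_image_eq {s : Fin t → Finset (Fin n)}
    (hs : ∀ i, (s i).image χ = ({c | τ c = i} : Finset (Fin k)))
    (hcard : ∀ i, #(s i) = #{c | τ c = i}) : #(univ.biUnion s) = k := by
  have himage : (univ.biUnion s).image χ = univ := by
    refine eq_univ_of_forall fun c => ?_
    rw [biUnion_image]
    exact mem_biUnion.2 ⟨τ c, mem_univ _, by simp [hs]⟩
  rw [← card_image_of_injOn (injOn_biUnion_of_image_eq hs hcard), himage, card_univ,
    Fintype.card_fin]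

variable {ℓ : ℕ} {S : Fin t → Finset (Finset (Fin n))}

lemma biUnion_mem_cliqueSet_auxGraph (hS : ∀ i, ∀ a ∈ S i, #a = #{c | τ c = i})
    {s : Fin t → Finset (Fin n)} (hs : s ∈ Fintype.piFinset (colourClass τ χ S)) :
    univ.biUnion s ∈ cliqueSet k ℓ (auxGraph τ χ ℓ S) := by
  simp only [Fintype.mem_piFinset, colourClass, mem_filter] at hs
  have hcard : ∀ i, #(s i) = #{c | τ c = i} := fun i => hS i _ (hs i).1
  simp only [cliqueSet, auxGraph, mem_filter, mem_powersetCard]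
  refine ⟨⟨subset_univ _, card_biUnion_of_image_eq (fun i => (hs i).2) hcard⟩,
    fun e ⟨he, hecard⟩ => ⟨⟨subset_univ _, hecard⟩,
      (injOn_biUnion_of_image_eq (fun i => (hs i).2) hcard).mono (coe_subset.2 he),
      fun i hi => ?_⟩⟩
  have hsub : {v ∈ e | τ (χ v) = i} ⊆ s i :=
    filter_biUnion_eq_of_image_eq (fun i => (hs i).2) i ▸ filter_subset_filter _ he
  rw [eq_of_subset_of_card_le hsub (by rw [hi, hcard])]
  exact (hs i).1

/-- A rainbow `k`-set carries all `k` colours, so it splits into its colour blocks; `ℓ ≥ 2`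
makes cliques rainbow and `#{c | τ c = i} ≤ ℓ` lets each block be tested by an edge. -/
lemma exists_biUnion_eq_of_mem_cliqueSet_auxGraph (hℓ : 2 ≤ ℓ) (hℓk : ℓ ≤ k)
    (hτ : ∀ i, #{c | τ c = i} ≤ ℓ) {T : Finset (Fin n)}
    (hT : T ∈ cliqueSet k ℓ (auxGraph τ χ ℓ S)) :
    ∃ s ∈ Fintype.piFinset (colourClass τ χ S), univ.biUnion s = T := by
  simp only [cliqueSet, auxGraph, mem_filter, mem_powersetCard] at hT
  obtain ⟨⟨-, hTk⟩, hedges⟩ := hT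
  have hedge : ∀ e ⊆ T, #e = ℓ → Set.InjOn χ e ∧
      ∀ i, #{v ∈ e | τ (χ v) = i} = #{c | τ c = i} → {v ∈ e | τ (χ v) = i} ∈ S i :=
    fun e he hecard => (hedges e ⟨he, hecard⟩).2
  have hinj : Set.InjOn χ T := by
    intro u hu v hv huv
    by_contra huv'
    obtain ⟨e, hue, heT, hecard⟩ := exists_subsuperset_card_eq (insert_subset hu
      (singleton_subset_iff.2 hv)) (by rwa [card_pair huv']) (hTk ▸ hℓk)
    exact huv' ((hedge e heT hecard).1 (hue (mem_insert_self u _))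
      (hue (mem_insert_of_mem (mem_singleton_self v))) huv)
  have himage : T.image χ = univ :=
    eq_univ_of_card _ (by rw [card_image_of_injOn hinj, hTk, Fintype.card_fin])
  set s : Fin t → Finset (Fin n) := fun i => {v ∈ T | τ (χ v) = i}
  have hs_image : ∀ i, (s i).image χ = ({c | τ c = i} : Finset (Fin k)) := by
    intro i
    ext c
    simp only [s, mem_image, mem_filter, mem_univ, true_and]
    refine ⟨fun ⟨v, ⟨_, hv⟩, hvc⟩ => hvc ▸ hv, fun hc => ?_⟩
    obtain ⟨v, hv, rfl⟩ := mem_image.1 (himage ▸ mem_univ c)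
    exact ⟨v, ⟨hv, hc⟩, rfl⟩
  have hs_card : ∀ i, #(s i) = #{c | τ c = i} := fun i => by
    rw [← hs_image i, card_image_of_injOn (hinj.mono (coe_subset.2 (filter_subset _ _)))]
  have hs_mem : ∀ i, s i ∈ S i := by
    intro i
    obtain ⟨e, hse, heT, hecard⟩ :=
      exists_subsuperset_card_eq (filter_subset _ T) ((hs_card i).trans_le (hτ i)) (hTk ▸ hℓk)
    have he_part : {v ∈ e | τ (χ v) = i} = s i :=
      (filter_subset_filter _ heT).antisymm fun v hv => mem_filter.2 ⟨hse hv, (mem_filter.1 hv).2⟩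
    exact he_part ▸ (hedge e heT hecard).2 i (he_part ▸ hs_card i)
  refine ⟨s, Fintype.mem_piFinset.2 fun i => mem_filter.2 ⟨hs_mem i, hs_image i⟩, ?_⟩
  exact (biUnion_subset.2 fun i _ => filter_subset _ T).antisymm fun v hv =>
    mem_biUnion.2 ⟨τ (χ v), mem_univ _, mem_filter.2 ⟨hv, rfl⟩⟩

lemma cliqueSet_auxGraph (hℓ : 2 ≤ ℓ) (hℓk : ℓ ≤ k) (hτ : ∀ i, #{c | τ c = i} ≤ ℓ)
    (hS : ∀ i, ∀ a ∈ S i, #a = #{c | τ c = i}) :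
    cliqueSet k ℓ (auxGraph τ χ ℓ S) =
      (Fintype.piFinset (colourClass τ χ S)).image (univ.biUnion ·) := by
  ext T
  refine ⟨fun hT => ?_, fun hT => ?_⟩
  · obtain ⟨s, hs, rfl⟩ := exists_biUnion_eq_of_mem_cliqueSet_auxGraph hℓ hℓk hτ hT
    exact mem_image_of_mem _ hs
  · obtain ⟨s, hs, rfl⟩ := mem_image.1 hT
    exact biUnion_mem_cliqueSet_auxGraph hS hs

lemma injOn_biUnion_piFinset_colourClass :
    Set.InjOn (fun s : Fin t → Finset (Fin n) => univ.biUnion s)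
      ↑(Fintype.piFinset (colourClass τ χ S)) := by
  have himage : ∀ s ∈ Fintype.piFinset (colourClass τ χ S),
      ∀ i, (s i).image χ = ({c | τ c = i} : Finset (Fin k)) :=
    fun s hs i => (mem_filter.1 (Fintype.mem_piFinset.1 hs i)).2
  intro s hs s' hs' h
  funext i
  rw [← filter_biUnion_eq_of_image_eq (himage s hs) i,
    ← filter_biUnion_eq_of_image_eq (himage s' hs') i]
  simp only at h
  rw [h]

lemma piFinset_colourClass :
    Fintype.piFinset (colourClass τ χ S) =
      {s ∈ Fintype.piFinset S | ∀ i, (s i).image χ = ({c | τ c = i} : Finset (Fin k))} := by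
  ext s
  simp [colourClass, forall_and]

lemma eCount_colourClass (H : Finset (Finset (Fin n))) :
    eCount H (colourClass τ χ S) =
      #{s ∈ {s ∈ Fintype.piFinset S | univ.biUnion s ∈ H} |
        ∀ i, (s i).image χ = ({c | τ c = i} : Finset (Fin k))} := by
  rw [eCount, piFinset_colourClass, filter_filter, filter_filter]
  simp only [and_comm]

lemma card_cliqueSet_auxGraph (hℓ : 2 ≤ ℓ) (hℓk : ℓ ≤ k) (hτ : ∀ i, #{c | τ c = i} ≤ ℓ)
    (hS : ∀ i, ∀ a ∈ S i, #a = #{c | τ c = i}) :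
    #(cliqueSet k ℓ (auxGraph τ χ ℓ S)) = ∏ i, #(colourClass τ χ S i) := by
  rw [cliqueSet_auxGraph hℓ hℓk hτ hS, card_image_of_injOn injOn_biUnion_piFinset_colourClass,
    Fintype.card_piFinset]

lemma card_cliqueSet_auxGraph_inter (hℓ : 2 ≤ ℓ) (hℓk : ℓ ≤ k)
    (hτ : ∀ i, #{c | τ c = i} ≤ ℓ) (hS : ∀ i, ∀ a ∈ S i, #a = #{c | τ c = i})
    (H : Finset (Finset (Fin n))) :
    #(cliqueSet k ℓ (auxGraph τ χ ℓ S) ∩ H) = eCount H (colourClass τ χ S) := by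
  rw [cliqueSet_auxGraph hℓ hℓk hτ hS, ← filter_mem_eq_inter, filter_image,
    card_image_of_injOn
      (injOn_biUnion_piFinset_colourClass.mono (coe_subset.2 (filter_subset _ _)))]
  rfl

end AuxiliaryGraph

section Estimate

variable {n k t ℓ : ℕ} {τ : Fin k → Fin t} {S : Fin t → Finset (Finset (Fin n))}

lemma cast_mul_sub_eq_sum_colourClass {H : Finset (Finset (Fin n))} (hH : ∀ e ∈ H, #e = k)
    (hS : ∀ i, ∀ a ∈ S i, #a = #{c | τ c = i}) (p : ℝ) :
    (((∏ i, (#{c | τ c = i}).factorial) * k ^ n : ℕ) : ℝ) *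
        ((eCount H S : ℝ) - p * #{s ∈ Fintype.piFinset S | Pairwise (Disjoint on s)}) =
      k ^ k * ∑ χ : Fin n → Fin k,
        ((eCount H (colourClass τ χ S) : ℝ) - p * ∏ i, (#(colourClass τ χ S i) : ℝ)) := by
  have hsizes : ∀ s ∈ Fintype.piFinset S, ∀ i, #(s i) = #{c | τ c = i} :=
    fun s hs i => hS i _ (Fintype.mem_piFinset.1 hs i)
  have hedges : (∑ χ : Fin n → Fin k, eCount H (colourClass τ χ S)) * k ^ k =
      (∏ i, (#{c | τ c = i}).factorial) * k ^ n * eCount H S := by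
    simp only [eCount_colourClass]
    rw [sum_card_filter_forall_image_eq_fibre_mul _ fun s hs => hsizes s (mem_filter.1 hs).1,
      Fintype.card_fin, filter_true_of_mem fun s hs => ?_]
    · rfl
    rw [mem_filter] at hs
    refine pairwise_disjoint_of_sum_card_le s ?_
    rw [hH _ hs.2, sum_congr rfl fun i _ => hsizes s hs.1 i, sum_card_fibres]
  have htuples : (∑ χ : Fin n → Fin k, ∏ i, #(colourClass τ χ S i)) * k ^ k =
      (∏ i, (#{c | τ c = i}).factorial) * k ^ n *
        #{s ∈ Fintype.piFinset S | Pairwise (Disjoint on s)} := by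
    simp only [← Fintype.card_piFinset, piFinset_colourClass]
    rw [sum_card_filter_forall_image_eq_fibre_mul _ hsizes, Fintype.card_fin]
  rw [sum_sub_distrib, ← mul_sum]
  have h1 := congrArg (Nat.cast (R := ℝ)) hedges
  have h2 := congrArg (Nat.cast (R := ℝ)) htuples
  push_cast at h1 h2 ⊢
  linear_combination h2 * p - h1

lemma abs_eCount_sub_le (hk : 0 < k) {H : Finset (Finset (Fin n))} (hH : ∀ e ∈ H, #e = k)
    (hS : ∀ i, ∀ a ∈ S i, #a = #{c | τ c = i}) {p B : ℝ}
    (hB : ∀ χ : Fin n → Fin k, |(eCount H (colourClass τ χ S) : ℝ) -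
      p * ∏ i, (#(colourClass τ χ S i) : ℝ)| ≤ B) :
    |(eCount H S : ℝ) - p * #{s ∈ Fintype.piFinset S | Pairwise (Disjoint on s)}| ≤ k ^ k * B := by
  set N : ℕ := (∏ i, (#{c | τ c = i}).factorial) * k ^ n
  have hN : (k : ℝ) ^ n ≤ N := by
    have : 1 ≤ ∏ i, (#{c | τ c = i}).factorial := one_le_prod' fun i _ => Nat.factorial_pos _
    exact_mod_cast Nat.le_mul_of_pos_left _ this
  have hB0 : 0 ≤ B := (abs_nonneg _).trans (hB fun _ => ⟨0, hk⟩)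
  have hkpos : (0 : ℝ) < k ^ k := pow_pos (Nat.cast_pos.2 hk) k
  have hNpos : (0 : ℝ) < N := (pow_pos (Nat.cast_pos.2 hk) n).trans_le hN
  refine le_of_mul_le_mul_left ?_ hNpos
  calc (N : ℝ) * |(eCount H S : ℝ) - p * #{s ∈ Fintype.piFinset S | Pairwise (Disjoint on s)}|
      = (k : ℝ) ^ k * |∑ χ : Fin n → Fin k, ((eCount H (colourClass τ χ S) : ℝ) -
          p * ∏ i, (#(colourClass τ χ S i) : ℝ))| := by
        rw [← abs_of_pos hNpos, ← abs_mul, cast_mul_sub_eq_sum_colourClass hH hS, abs_mul,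
          abs_of_pos hkpos]
    _ ≤ (k : ℝ) ^ k * ∑ _χ : Fin n → Fin k, B :=
        mul_le_mul_of_nonneg_left ((abs_sum_le_sum_abs _ _).trans (sum_le_sum fun χ _ => hB χ))
          hkpos.le
    _ = (k : ℝ) ^ k * (k ^ n * B) := by
        rw [sum_const, card_univ, Fintype.card_fun, Fintype.card_fin, Fintype.card_fin,
          nsmul_eq_mul, Nat.cast_pow]
    _ ≤ N * (k ^ k * B) := by
        rw [mul_left_comm]
        exact mul_le_mul_of_nonneg_right hN (mul_nonneg hkpos.le hB0)

lemma abs_eCount_sub_le_of_forall_cliqueSet (hℓ : 2 ≤ ℓ) (hℓk : ℓ ≤ k)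
    (hτ : ∀ i, 0 < #{c | τ c = i} ∧ #{c | τ c = i} ≤ ℓ)
    {H : Finset (Finset (Fin n))} (hH : ∀ e ∈ H, #e = k)
    (hS : ∀ i, ∀ a ∈ S i, #a = #{c | τ c = i}) {p B : ℝ}
    (hCD : ∀ G : Finset (Finset (Fin n)), (∀ e ∈ G, #e = ℓ) →
      |(#(cliqueSet k ℓ G ∩ H) : ℝ) - p * #(cliqueSet k ℓ G)| ≤ B) :
    |(eCount H S : ℝ) - p * ∏ i, (#(S i) : ℝ)| ≤ k ^ k * B + |p| * (t * t * n ^ (k - 1)) := by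
  have hdisjoint := abs_eCount_sub_le (by omega) hH hS (p := p) (B := B) fun χ => by
    have hG : ∀ e ∈ auxGraph τ χ ℓ S, #e = ℓ := fun e he =>
      (mem_powersetCard.1 (mem_filter.1 he).1).2
    simpa only [card_cliqueSet_auxGraph_inter hℓ hℓk (fun i => (hτ i).2) hS,
      card_cliqueSet_auxGraph hℓ hℓk (fun i => (hτ i).2) hS, Nat.cast_prod] using hCD _ hG
  have hoverlap : (#{s ∈ Fintype.piFinset S | ¬Pairwise (Disjoint on s)} : ℝ) ≤
      t * t * n ^ (k - 1) := by
    exact_mod_cast card_filter_not_pairwise_disjoint_le hS (fun i => (hτ i).1) (sum_card_fibres τ)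
  have hsplit : ∏ i, (#(S i) : ℝ) = #{s ∈ Fintype.piFinset S | Pairwise (Disjoint on s)} +
      #{s ∈ Fintype.piFinset S | ¬Pairwise (Disjoint on s)} := by
    rw [← Nat.cast_prod, ← Fintype.card_piFinset,
      ← card_filter_add_card_filter_not (p := fun s => Pairwise (Disjoint on s)), Nat.cast_add]
  calc |(eCount H S : ℝ) - p * ∏ i, (#(S i) : ℝ)|
      ≤ |(eCount H S : ℝ) - p * #{s ∈ Fintype.piFinset S | Pairwise (Disjoint on s)}| +
          |p| * #{s ∈ Fintype.piFinset S | ¬Pairwise (Disjoint on s)} := by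
        rw [hsplit, mul_add, ← sub_sub]
        refine (abs_sub _ _).trans_eq ?_
        rw [abs_mul, Nat.abs_cast]
    _ ≤ k ^ k * B + |p| * (t * t * n ^ (k - 1)) :=
        add_le_add hdisjoint (mul_le_mul_of_nonneg_left hoverlap (abs_nonneg p))

end Estimate

theorem cd_implies_expand_general (k ℓ : ℕ) (hℓ2 : 2 ≤ ℓ) (hℓk : ℓ < k)
    (p : ℝ) (π : List ℕ) (hπ : ProperPartition k π) (hmax : ∀ m ∈ π, m ≤ ℓ)
    (H : HSeq) (hH : UniformSeq k H) (h : CD k p ℓ H) :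
    Expand k p π H := by
  obtain ⟨f, hf_small, hf⟩ := h
  obtain ⟨-, hpos, hsum⟩ := hπ
  obtain ⟨τ, hτ⟩ := exists_card_fibres_eq (fun i => π.get i)
    (by rw [← List.sum_ofFn, List.ofFn_get, hsum])
  have hτ' : ∀ i, 0 < #{c | τ c = i} ∧ #{c | τ c = i} ≤ ℓ := fun i =>
    hτ i ▸ ⟨hpos _ (π.get_mem i), hmax _ (π.get_mem i)⟩
  refine ⟨fun n => k ^ k * f n + |p| * (π.length * π.length * n ^ (k - 1)), ?_, fun n S hS => ?_⟩
  · have hpow : (fun n : ℕ => (n : ℝ) ^ (k - 1)) =o[atTop] fun n : ℕ => (n : ℝ) ^ k :=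
      (isLittleO_pow_pow_atTop_of_lt (by omega)).comp_tendsto tendsto_natCast_atTop_atTop
    exact (hf_small.const_mul_left _).add
      ((hpow.const_mul_left (π.length * π.length : ℝ)).const_mul_left |p|)
  · exact abs_eCount_sub_le_of_forall_cliqueSet hℓ2 hℓk.le hτ' (hH n)
      (fun i a ha => (hS i a ha).trans (hτ i).symm) (hf n)

/-- if every part of `π` is at most `ℓ` then `CD_p(ℓ)` implies `Expand_p(π)`. -/
theorem cd_implies_expand (k ℓ : ℕ) (hk : 3 ≤ k) (hℓ2 : 2 ≤ ℓ) (hℓk : ℓ < k)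
    (p : ℝ) (hp0 : 0 < p) (hp1 : p < 1)
    (π : List ℕ) (hπ : ProperPartition k π) (hmax : ∀ m ∈ π, m ≤ ℓ)
    (H : HSeq) (hH : UniformSeq k H) (h : CD k p ℓ H) :
    Expand k p π H :=
  cd_implies_expand_general k ℓ hℓ2 hℓk p π hπ hmax H hH h
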